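/- Let A be a real symmetric positive definite n×n matrix and M a real symmetric positive semidefinite n×n matrix, and define the surrogate g(B) = trace(A B) + trace(M B⁻¹) on symmetric positive definite n×n matrices. Then the gradient condition for stationarity of g at B is A − B⁻¹ M B⁻¹ = 0, i.e., a symmetric positive definite matrix B is a stationary point of g if and only if B A B = M; when M is positive definite this stationary point is unique and equals the geometric mean G(A⁻¹, M) = A^{-1/2} (A^{1/2} M A^{1/2})^{1/2} A^{-1/2}. -/

import Mathlib

open Matrix

/-- The unique symmetric positive semidefinite square root of a positive
semidefinite real matrix (junk value `0` off the positive semidefinite cone). -/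
noncomputable def msqrt {n : ℕ} (A : Matrix (Fin n) (Fin n) ℝ) :
    Matrix (Fin n) (Fin n) ℝ :=
  letI := Classical.propDecidable A.PosSemidef
  if h : A.PosSemidef then
    (h.1.eigenvectorUnitary : Matrix (Fin n) (Fin n) ℝ) *
      diagonal (Real.sqrt ∘ h.1.eigenvalues) *
      (star h.1.eigenvectorUnitary : Matrix (Fin n) (Fin n) ℝ)
  else 0

/-!
Along the line `B + t V` the derivative of `g` is `tr ((A - B⁻¹ M B⁻¹) V)`, because
inversion has derivative `V ↦ -B⁻¹ V B⁻¹`. The matrix `A - B⁻¹ M B⁻¹` is itself symmetric,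
so testing with it gives `tr ((A - B⁻¹ M B⁻¹)²) = 0`; hence stationarity means
`A = B⁻¹ M B⁻¹`, i.e. `B A B = M`. Conjugating this Riccati equation by `S = A^{1/2}` turns it
into `(S B S)² = S M S`, and uniqueness of positive semidefinite square roots gives
`S B S = (S M S)^{1/2}`.
-/

lemma IsUnit.mul_left_right_inj {R : Type*} [Monoid R] {S X Y : R} (hS : IsUnit S) :
    S * X * S = S * Y * S ↔ X = Y := by
  rw [hS.mul_left_inj, hS.mul_right_inj]

namespace Matrix

variable {ι α : Type*} [Fintype ι] [DecidableEq ι] [CommRing α]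

lemma eq_inv_mul_mul_inv_iff {S X Y : Matrix ι ι α} (hS : IsUnit S) :
    X = S⁻¹ * Y * S⁻¹ ↔ S * X * S = Y := by
  have hS : IsUnit S.det := (isUnit_iff_isUnit_det S).mp hS
  constructor <;> rintro rfl <;> simp [Matrix.mul_assoc, hS]

lemma IsSymm.inv_mul_mul_inv {S X : Matrix ι ι α} (hS : S.IsSymm) (hX : X.IsSymm) :
    (S⁻¹ * X * S⁻¹).IsSymm := by
  rw [IsSymm, transpose_mul, transpose_mul, hS.inv.eq, hX.eq, Matrix.mul_assoc]

end Matrix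

section MatrixSqrt

open scoped MatrixOrder

variable {n : ℕ} {A X : Matrix (Fin n) (Fin n) ℝ}

lemma msqrt_eq_cfcSqrt (hA : A.PosSemidef) : msqrt A = CFC.sqrt A := by
  rw [msqrt, dif_pos hA, CFC.sqrt_eq_cfc, cfc_nnreal_eq_real _ A hA.nonneg, hA.1.cfc_eq]
  simp only [IsHermitian.cfc, Unitary.conjStarAlgAut_apply]
  congr 3
  funext i
  simp [max_eq_left (hA.eigenvalues_nonneg i)]

lemma posSemidef_msqrt (hA : A.PosSemidef) : (msqrt A).PosSemidef := by
  rw [msqrt_eq_cfcSqrt hA]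
  exact nonneg_iff_posSemidef.mp (CFC.sqrt_nonneg A)

lemma msqrt_mul_self (hA : A.PosSemidef) : msqrt A * msqrt A = A := by
  rw [msqrt_eq_cfcSqrt hA]
  exact CFC.sqrt_mul_sqrt_self A hA.nonneg

lemma eq_msqrt_iff (hX : X.PosSemidef) (hA : A.PosSemidef) : X = msqrt A ↔ X * X = A := by
  rw [msqrt_eq_cfcSqrt hA, eq_comm, CFC.sqrt_eq_iff A X hA.nonneg hX.nonneg]

lemma msqrt_inv (hA : A.PosSemidef) : msqrt A⁻¹ = (msqrt A)⁻¹ :=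
  ((eq_msqrt_iff (posSemidef_msqrt hA).inv hA.inv).mpr
    (by rw [← Matrix.mul_inv_rev, msqrt_mul_self hA])).symm

lemma isUnit_msqrt (hA : A.PosDef) : IsUnit (msqrt A) := by
  have hdet : (msqrt A).det * (msqrt A).det = A.det := by
    rw [← det_mul, msqrt_mul_self hA.posSemidef]
  exact (isUnit_iff_isUnit_det _).mpr (mul_self_ne_zero.mp (hdet ▸ hA.det_pos.ne')).isUnit

theorem mul_mul_eq_iff_eq_geomMean {M B : Matrix (Fin n) (Fin n) ℝ} (hA : A.PosDef)
    (hM : M.PosSemidef) (hB : B.PosSemidef) :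
    B * A * B = M ↔ B = msqrt A⁻¹ * msqrt (msqrt A * M * msqrt A) * msqrt A⁻¹ := by
  set S := msqrt A
  have hS : IsUnit S := isUnit_msqrt hA
  have hSS : S * S = A := msqrt_mul_self hA.posSemidef
  have hSsymm : Sᴴ = S := (posSemidef_msqrt hA.posSemidef).isHermitian.eq
  have hSBS : (S * B * S).PosSemidef := by
    simpa only [hSsymm] using hB.mul_mul_conjTranspose_same S
  have hSMS : (S * M * S).PosSemidef := by
    simpa only [hSsymm] using hM.mul_mul_conjTranspose_same S
  calc B * A * B = M ↔ S * (B * A * B) * S = S * M * S := hS.mul_left_right_inj.symm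
    _ ↔ (S * B * S) * (S * B * S) = S * M * S := by
      rw [← hSS, show S * (B * (S * S) * B) * S = (S * B * S) * (S * B * S) by noncomm_ring]
    _ ↔ S * B * S = msqrt (S * M * S) := (eq_msqrt_iff hSBS hSMS).symm
    _ ↔ B = S⁻¹ * msqrt (S * M * S) * S⁻¹ := (eq_inv_mul_mul_inv_iff hS).symm
    _ ↔ _ := by rw [msqrt_inv hA.posSemidef]

end MatrixSqrt

section Derivative

variable {ι : Type*} [Fintype ι] [DecidableEq ι]

attribute [local instance] Matrix.linftyOpNormedRing Matrix.linftyOpNormedAlgebra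

lemma hasDerivAt_add_smul (B V : Matrix ι ι ℝ) (x : ℝ) :
    HasDerivAt (fun t : ℝ => B + t • V) V x := by
  have h := ((hasDerivAt_id' x).smul_const V).const_add B
  rwa [one_smul] at h

lemma hasDerivAt_inv_add_smul {B : Matrix ι ι ℝ} (hB : IsUnit B) (V : Matrix ι ι ℝ) :
    HasDerivAt (fun t : ℝ => (B + t • V)⁻¹) (-(B⁻¹ * V * B⁻¹)) 0 := by
  obtain ⟨u, rfl⟩ := hB
  have h := (hasFDerivAt_ringInverse (𝕜 := ℝ) u).comp_hasDerivAt_of_eq 0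
    (hasDerivAt_add_smul (u : Matrix ι ι ℝ) V 0) (by simp)
  simp only [Function.comp_def, ← nonsing_inv_eq_ringInverse, coe_units_inv] at h
  exact h

lemma HasDerivAt.trace_const_mul {f : ℝ → Matrix ι ι ℝ} {f' : Matrix ι ι ℝ} {x : ℝ}
    (C : Matrix ι ι ℝ) (hf : HasDerivAt f f' x) :
    HasDerivAt (fun t => (C * f t).trace) (C * f').trace x :=
  (LinearMap.toContinuousLinearMap (traceLinearMap ι ℝ ℝ)).hasFDerivAt.comp_hasDerivAt x
    (hf.const_mul C)

end Derivative

section Stationarity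

variable {ι : Type*} [Fintype ι] [DecidableEq ι]

lemma deriv_trace_mul_add_trace_mul_inv (A M V : Matrix ι ι ℝ) {B : Matrix ι ι ℝ}
    (hB : IsUnit B) :
    deriv (fun t : ℝ => (A * (B + t • V)).trace + (M * (B + t • V)⁻¹).trace) 0 =
      ((A - B⁻¹ * M * B⁻¹) * V).trace := by
  have hA := (hasDerivAt_add_smul B V 0).trace_const_mul A
  have hM := (hasDerivAt_inv_add_smul hB V).trace_const_mul M
  rw [deriv_fun_add hA.differentiableAt hM.differentiableAt, hA.deriv, hM.deriv,
    sub_mul, trace_sub, mul_neg, trace_neg, ← sub_eq_add_neg,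
    ← Matrix.mul_assoc, ← Matrix.mul_assoc, trace_mul_comm (M * B⁻¹ * V)]
  simp only [Matrix.mul_assoc]

lemma forall_isSymm_trace_mul_eq_zero_iff {C : Matrix ι ι ℝ} (hC : C.IsSymm) :
    (∀ V : Matrix ι ι ℝ, V.IsSymm → (C * V).trace = 0) ↔ C = 0 := by
  refine ⟨fun h => ?_, by rintro rfl V -; simp⟩
  rw [← trace_conjTranspose_mul_self_eq_zero_iff, conjTranspose_eq_transpose_of_trivial, hC.eq]
  exact h C hC

theorem forall_isSymm_deriv_eq_zero_iff {A M B : Matrix ι ι ℝ} (hA : A.IsSymm) (hM : M.IsSymm)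
    (hB : B.IsSymm) (hBu : IsUnit B) :
    (∀ V : Matrix ι ι ℝ, V.IsSymm →
        deriv (fun t : ℝ => (A * (B + t • V)).trace + (M * (B + t • V)⁻¹).trace) 0 = 0) ↔
      B * A * B = M := by
  simp only [deriv_trace_mul_add_trace_mul_inv A M _ hBu]
  rw [forall_isSymm_trace_mul_eq_zero_iff (hA.sub (hB.inv_mul_mul_inv hM)), sub_eq_zero,
    eq_inv_mul_mul_inv_iff hBu]

end Stationarity

/-- Stationarity of the surrogate `g(B) = tr(A B) + tr(M B⁻¹)` (Part II of the
proof of Theorem 2 of the paper): a symmetric positive definite `B` is a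
stationary point of `g` (i.e. all directional derivatives of `g` at `B` along
symmetric directions vanish, expressing `A − B⁻¹ M B⁻¹ = 0`) if and only if
`B A B = M`; and when `M` is positive definite this stationary point is unique
and equals the geometric mean
`G(A⁻¹, M) = A^{-1/2} (A^{1/2} M A^{1/2})^{1/2} A^{-1/2}`. -/
theorem stmt_17 {n : ℕ} (A M : Matrix (Fin n) (Fin n) ℝ)
    (hA : A.PosDef) (hM : M.PosSemidef) :
    (∀ B : Matrix (Fin n) (Fin n) ℝ, B.PosDef →
      ((∀ V : Matrix (Fin n) (Fin n) ℝ, V.IsSymm →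
          deriv (fun t : ℝ =>
            (A * (B + t • V)).trace + (M * (B + t • V)⁻¹).trace) 0 = 0) ↔
        B * A * B = M)) ∧
    (M.PosDef → ∀ B : Matrix (Fin n) (Fin n) ℝ, B.PosDef →
      ((∀ V : Matrix (Fin n) (Fin n) ℝ, V.IsSymm →
          deriv (fun t : ℝ =>
            (A * (B + t • V)).trace + (M * (B + t • V)⁻¹).trace) 0 = 0) ↔
        B = msqrt A⁻¹ * msqrt (msqrt A * M * msqrt A) * msqrt A⁻¹)) := by
  have stationary := fun (B : Matrix (Fin n) (Fin n) ℝ) (hB : B.PosDef) =>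
    forall_isSymm_deriv_eq_zero_iff (isHermitian_iff_isSymm.mp hA.isHermitian)
      (isHermitian_iff_isSymm.mp hM.isHermitian) (isHermitian_iff_isSymm.mp hB.isHermitian)
      hB.isUnit
  exact ⟨stationary, fun _ B hB =>
    (stationary B hB).trans (mul_mul_eq_iff_eq_geomMean hA hM hB.posSemidef)⟩
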